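/- (Sandwich bound for the intrinsic dimension.) Let K = (G, M, I) be a finite formal context and s ∈ [0,1]; suppose {α ∈ [0,1/2] : ObsDiam(D_s(K); −α) > 0} is nonempty, put α_{−1} for its supremum and σ_{−1} for the smallest positive value attained by α ↦ ObsDiam(D_s(K); −α) on [0,1/2], and assume Δ(D_s(K)) > 0. With Δ_−(D_s(K)) := Δ(D_s(K)), Δ_+(D_s(K)) := Δ(D_s(K)) + (1/2 − α_{−1})·σ_{−1}, ∂_Δ^−(D_s(K)) := Δ_+(D_s(K))^{−2} and ∂_Δ^+(D_s(K)) := Δ_−(D_s(K))^{−2}, one has ∂_Δ^−(D_s(K)) ≤ ∂_Δ(D(K)) ≤ ∂_Δ^+(D_s(K)), where ∂_Δ(D(K)) = Δ(D(K))^{−2}. -/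
import Mathlib


open Set

/-- Attribute derivation `A'` of an object set. -/
def extentPrime {G M : Type*} (I : G → M → Prop) (A : Set G) : Set M :=
  {m | ∀ g ∈ A, I g m}

/-- Object derivation `B'` of an attribute set. -/
def intentPrime {G M : Type*} (I : G → M → Prop) (B : Set M) : Set G :=
  {g | ∀ m ∈ B, I g m}

/-- `(A, B)` is a formal concept of the context `(G, M, I)`. -/
def IsConcept {G M : Type*} (I : G → M → Prop) (A : Set G) (B : Set M) : Prop :=
  extentPrime I A = B ∧ intentPrime I B = A

/-- Normalized counting measure `ν_G(A) = |A| / |G|`. -/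
noncomputable def nuG (G : Type*) [Fintype G] (A : Set G) : ℝ :=
  (A.ncard : ℝ) / (Fintype.card G : ℝ)

/-- Normalized counting measure `ν_M(B) = |B| / |M|`. -/
noncomputable def nuM (M : Type*) [Fintype M] (B : Set M) : ℝ :=
  (B.ncard : ℝ) / (Fintype.card M : ℝ)

/-- Observable diameter `ObsDiam(𝒟(K); -α)` of the full geometric data set;
note that `sSup ∅ = 0` in `ℝ`. -/
noncomputable def ObsDiamFull {G M : Type*} [Fintype G] [Fintype M]
    (I : G → M → Prop) (α : ℝ) : ℝ :=
  sSup {x : ℝ | ∃ A : Set G, ∃ B : Set M, IsConcept I A B ∧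
    α < nuM M B ∧ nuM M B < 1 - α ∧ x = nuG G A}

/-- Observable diameter `ObsDiam(𝒟ₛ(K); -α)` of the geometric data set restricted
to concepts with minimum support `s`; note that `sSup ∅ = 0` in `ℝ`. -/
noncomputable def ObsDiamS {G M : Type*} [Fintype G] [Fintype M]
    (I : G → M → Prop) (s α : ℝ) : ℝ :=
  sSup {x : ℝ | ∃ A : Set G, ∃ B : Set M, IsConcept I A B ∧ s ≤ nuG G A ∧
    α < nuM M B ∧ nuM M B < 1 - α ∧ x = nuG G A}

/-- `Δ(𝒟(K)) = ∫_0^{1/2} ObsDiam(𝒟(K); -α) dα`. -/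
noncomputable def DeltaFull {G M : Type*} [Fintype G] [Fintype M]
    (I : G → M → Prop) : ℝ :=
  ∫ α in (0:ℝ)..(1/2 : ℝ), ObsDiamFull I α

/-- `Δ(𝒟ₛ(K)) = ∫_0^{1/2} ObsDiam(𝒟ₛ(K); -α) dα`. -/
noncomputable def DeltaS {G M : Type*} [Fintype G] [Fintype M]
    (I : G → M → Prop) (s : ℝ) : ℝ :=
  ∫ α in (0:ℝ)..(1/2 : ℝ), ObsDiamS I s α

section Aux

variable {G M : Type*} [Fintype G] [Fintype M] [Nonempty G] [Nonempty M] (I : G → M → Prop)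

/-- The set whose sup is `ObsDiamFull`. -/
def FullSet (α : ℝ) : Set ℝ :=
  {x : ℝ | ∃ A : Set G, ∃ B : Set M, IsConcept I A B ∧
    α < nuM M B ∧ nuM M B < 1 - α ∧ x = nuG G A}

/-- The set whose sup is `ObsDiamS`. -/
def SuppSet (s α : ℝ) : Set ℝ :=
  {x : ℝ | ∃ A : Set G, ∃ B : Set M, IsConcept I A B ∧ s ≤ nuG G A ∧
    α < nuM M B ∧ nuM M B < 1 - α ∧ x = nuG G A}

lemma nuG_nonneg (A : Set G) : 0 ≤ nuG G A := by
  unfold nuG; positivity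

lemma nuG_le_one (A : Set G) : nuG G A ≤ 1 := by
  unfold nuG
  rw [div_le_one (by exact_mod_cast Fintype.card_pos)]
  exact_mod_cast (Set.ncard_le_ncard (Set.subset_univ A) Set.finite_univ).trans
    (by rw [Set.ncard_univ, Nat.card_eq_fintype_card])

lemma FullSet_subset_Icc (α : ℝ) : FullSet I α ⊆ Set.Icc (0:ℝ) 1 := by
  rintro x ⟨A, B, -, -, -, rfl⟩
  exact ⟨nuG_nonneg A, nuG_le_one A⟩

lemma SuppSet_subset_Full (s α : ℝ) : SuppSet I s α ⊆ FullSet I α := by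
  rintro x ⟨A, B, h1, -, h3, h4, rfl⟩
  exact ⟨A, B, h1, h3, h4, rfl⟩

lemma FullSet_bdd (α : ℝ) : BddAbove (FullSet I α) :=
  ⟨1, fun x hx => (FullSet_subset_Icc I α hx).2⟩

lemma SuppSet_bdd (s α : ℝ) : BddAbove (SuppSet I s α) :=
  ⟨1, fun x hx => (FullSet_subset_Icc I α (SuppSet_subset_Full I s α hx)).2⟩

lemma obsDiamFull_eq (α : ℝ) : ObsDiamFull I α = sSup (FullSet I α) := rfl
lemma obsDiamS_eq (s α : ℝ) : ObsDiamS I s α = sSup (SuppSet I s α) := rfl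

lemma obsDiamFull_nonneg (α : ℝ) : 0 ≤ ObsDiamFull I α :=
  Real.sSup_nonneg fun x hx => (FullSet_subset_Icc I α hx).1

lemma obsDiamS_nonneg (s α : ℝ) : 0 ≤ ObsDiamS I s α :=
  Real.sSup_nonneg fun x hx => (FullSet_subset_Icc I α (SuppSet_subset_Full I s α hx)).1

lemma obsDiamS_le_Full (s α : ℝ) : ObsDiamS I s α ≤ ObsDiamFull I α := by
  rcases (SuppSet I s α).eq_empty_or_nonempty with h | h
  · rw [obsDiamS_eq, h, Real.sSup_empty]; exact obsDiamFull_nonneg I α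
  · exact csSup_le_csSup (FullSet_bdd I α) h (SuppSet_subset_Full I s α)

lemma fullSet_anti {α β : ℝ} (h : α ≤ β) : FullSet I β ⊆ FullSet I α := by
  rintro x ⟨A, B, h1, h2, h3, rfl⟩
  exact ⟨A, B, h1, lt_of_le_of_lt h h2, h3.trans_le (by linarith), rfl⟩

lemma sSet_anti (s : ℝ) {α β : ℝ} (h : α ≤ β) : SuppSet I s β ⊆ SuppSet I s α := by
  rintro x ⟨A, B, h1, h2, h3, h4, rfl⟩
  exact ⟨A, B, h1, h2, lt_of_le_of_lt h h3, h4.trans_le (by linarith), rfl⟩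

lemma obsDiamFull_anti : Antitone (ObsDiamFull I) := by
  intro α β h
  rcases (FullSet I β).eq_empty_or_nonempty with he | hne
  · rw [obsDiamFull_eq, he, Real.sSup_empty]; exact obsDiamFull_nonneg I α
  · exact csSup_le_csSup (FullSet_bdd I α) hne (fullSet_anti I h)

lemma obsDiamS_anti (s : ℝ) : Antitone (ObsDiamS I s) := by
  intro α β h
  rcases (SuppSet I s β).eq_empty_or_nonempty with he | hne
  · rw [obsDiamS_eq, he, Real.sSup_empty]; exact obsDiamS_nonneg I s α
  · exact csSup_le_csSup (SuppSet_bdd I s α) hne (sSet_anti I s h)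

/-- If `ObsDiamS` is positive at `α`, it dominates `ObsDiamFull` there. -/
lemma full_le_S_of_pos {s α : ℝ} (hs0 : 0 ≤ s) (h : 0 < ObsDiamS I s α) :
    ObsDiamFull I α ≤ ObsDiamS I s α := by
  have hne : (SuppSet I s α).Nonempty := by
    by_contra hc
    rw [Set.not_nonempty_iff_eq_empty] at hc
    rw [obsDiamS_eq, hc, Real.sSup_empty] at h; exact lt_irrefl 0 h
  obtain ⟨x₀, hx₀⟩ := hne
  have hsle : s ≤ ObsDiamS I s α := by
    obtain ⟨A, B, -, h2, -, -, hxeq⟩ := id hx₀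
    exact (hxeq ▸ h2).trans (le_csSup (SuppSet_bdd I s α) hx₀)
  refine Real.sSup_le ?_ h.le
  rintro x ⟨A, B, h1, h3, h4, rfl⟩
  by_cases hA : s ≤ nuG G A
  · exact le_csSup (SuppSet_bdd I s α) ⟨A, B, h1, hA, h3, h4, rfl⟩
  · exact (le_of_not_ge hA).trans hsle

/-- `s ≤ σ` where `σ` is the least positive attained value. -/
lemma s_le_sigma {s σ : ℝ}
    (hσ : IsLeast {v : ℝ | 0 < v ∧ ∃ α ∈ Set.Icc (0:ℝ) (1/2), ObsDiamS I s α = v} σ) :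
    s ≤ σ := by
  obtain ⟨⟨hσ0, α₀, -, hval⟩, -⟩ := hσ
  have hne : (SuppSet I s α₀).Nonempty := by
    by_contra hc
    rw [Set.not_nonempty_iff_eq_empty] at hc
    rw [obsDiamS_eq, hc, Real.sSup_empty] at hval; exact hσ0.ne hval
  obtain ⟨x₀, hx₀⟩ := hne
  obtain ⟨A, B, -, h2, -, -, hxeq⟩ := id hx₀
  calc s ≤ x₀ := hxeq ▸ h2
    _ ≤ ObsDiamS I s α₀ := le_csSup (SuppSet_bdd I s α₀) hx₀
    _ = σ := hval

/-- If `ObsDiamS` vanishes at `α`, then `ObsDiamFull α ≤ σ`. -/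
lemma full_le_sigma_of_zero {s σ α : ℝ} (hs0 : 0 ≤ s)
    (hσ : IsLeast {v : ℝ | 0 < v ∧ ∃ α ∈ Set.Icc (0:ℝ) (1/2), ObsDiamS I s α = v} σ)
    (h : ObsDiamS I s α = 0) : ObsDiamFull I α ≤ σ := by
  have hσ0 : 0 < σ := hσ.1.1
  have hsσ : s ≤ σ := s_le_sigma I hσ
  refine Real.sSup_le ?_ hσ0.le
  rintro x ⟨A, B, h1, h3, h4, rfl⟩
  by_cases hA : s ≤ nuG G A
  · have hmem : nuG G A ∈ SuppSet I s α := ⟨A, B, h1, hA, h3, h4, rfl⟩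
    have := le_csSup (SuppSet_bdd I s α) hmem
    rw [← obsDiamS_eq, h] at this
    exact this.trans hσ0.le
  · exact (le_of_not_ge hA).trans hsσ

end Aux

theorem intrinsicDim_sandwich {G M : Type*} [Fintype G] [Fintype M] [Nonempty G] [Nonempty M]
    (I : G → M → Prop)
    (s : ℝ) (hs : s ∈ Set.Icc (0:ℝ) 1)
    (hne : {α : ℝ | α ∈ Set.Icc (0:ℝ) (1/2) ∧ 0 < ObsDiamS I s α}.Nonempty)
    (σ : ℝ)
    (hσ : IsLeast {v : ℝ | 0 < v ∧ ∃ α ∈ Set.Icc (0:ℝ) (1/2), ObsDiamS I s α = v} σ)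
    (hΔ : 0 < DeltaS I s) :
    (DeltaS I s +
        (1/2 - sSup {α : ℝ | α ∈ Set.Icc (0:ℝ) (1/2) ∧ 0 < ObsDiamS I s α}) * σ)
          ^ (-2 : ℤ) ≤ (DeltaFull I) ^ (-2 : ℤ) ∧
    (DeltaFull I) ^ (-2 : ℤ) ≤ (DeltaS I s) ^ (-2 : ℤ) := by
  set T : Set ℝ := {α : ℝ | α ∈ Set.Icc (0:ℝ) (1/2) ∧ 0 < ObsDiamS I s α} with hT
  set a : ℝ := sSup T with ha
  have hTbdd : BddAbove T := ⟨1/2, fun x hx => hx.1.2⟩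
  have ha0 : 0 ≤ a := by
    obtain ⟨β, hβ⟩ := hne
    exact hβ.1.1.trans (le_csSup hTbdd hβ)
  have ha12 : a ≤ 1/2 := csSup_le hne fun x hx => hx.1.2
  have hFint : ∀ u v : ℝ, IntervalIntegrable (ObsDiamFull I) MeasureTheory.volume u v :=
    fun u v => (obsDiamFull_anti I).intervalIntegrable
  have hSint : ∀ u v : ℝ, IntervalIntegrable (ObsDiamS I s) MeasureTheory.volume u v :=
    fun u v => (obsDiamS_anti I s).intervalIntegrable
  -- Δ_s ≤ Δ_full
  have hSF : DeltaS I s ≤ DeltaFull I := by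
    apply intervalIntegral.integral_mono_on (by norm_num) (hSint 0 (1/2)) (hFint 0 (1/2))
    intro x _
    exact obsDiamS_le_Full I s x
  -- split the full integral at a
  have hsplit : DeltaFull I = (∫ α in (0:ℝ)..a, ObsDiamFull I α)
      + ∫ α in a..(1/2:ℝ), ObsDiamFull I α :=
    (intervalIntegral.integral_add_adjacent_intervals (hFint 0 a) (hFint a (1/2))).symm
  have hsplitS : DeltaS I s = (∫ α in (0:ℝ)..a, ObsDiamS I s α)
      + ∫ α in a..(1/2:ℝ), ObsDiamS I s α :=
    (intervalIntegral.integral_add_adjacent_intervals (hSint 0 a) (hSint a (1/2))).symm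
  -- first piece: Full ≤ S a.e. on [0, a]
  have hpiece1 : (∫ α in (0:ℝ)..a, ObsDiamFull I α) ≤ ∫ α in (0:ℝ)..a, ObsDiamS I s α := by
    apply intervalIntegral.integral_mono_ae_restrict ha0 (hFint 0 a) (hSint 0 a)
    have hμ : ∀ᵐ (x : ℝ) ∂MeasureTheory.volume, x ≠ a := by
      rw [MeasureTheory.ae_iff]
      simp only [ne_eq, not_not, Set.setOf_eq_eq_singleton]
      exact Real.volume_singleton
    refine (MeasureTheory.ae_restrict_iff' measurableSet_Icc).mpr ?_
    filter_upwards [hμ] with x hx hxI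
    have hxa : x < a := lt_of_le_of_ne hxI.2 hx
    obtain ⟨β, hβT, hβx⟩ := exists_lt_of_lt_csSup hne hxa
    have hpos : 0 < ObsDiamS I s x := lt_of_lt_of_le hβT.2 (obsDiamS_anti I s hβx.le)
    exact full_le_S_of_pos I hs.1 hpos
  -- second piece: Full ≤ S + σ on [a, 1/2]
  have hpiece2 : (∫ α in a..(1/2:ℝ), ObsDiamFull I α)
      ≤ (∫ α in a..(1/2:ℝ), ObsDiamS I s α) + (1/2 - a) * σ := by
    have hconst : (∫ α in a..(1/2:ℝ), (fun β => ObsDiamS I s β + σ) α)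
        = (∫ α in a..(1/2:ℝ), ObsDiamS I s α) + (1/2 - a) * σ := by
      rw [intervalIntegral.integral_add (hSint a (1/2))
        (intervalIntegrable_const), intervalIntegral.integral_const, smul_eq_mul]
    rw [← hconst]
    apply intervalIntegral.integral_mono_on ha12 (hFint a (1/2))
      ((hSint a (1/2)).add intervalIntegrable_const)
    intro x _
    rcases lt_or_eq_of_le (obsDiamS_nonneg I s x) with hpos | hzero
    · have := full_le_S_of_pos I hs.1 hpos
      nlinarith [hσ.1.1]
    · have := full_le_sigma_of_zero I hs.1 hσ hzero.symm
      have hnn := obsDiamS_nonneg I s x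
      linarith
  have hFP : DeltaFull I ≤ DeltaS I s + (1/2 - a) * σ := by
    rw [hsplit, hsplitS]; linarith
  -- conclude with antitonicity of x ↦ x⁻²
  have key : ∀ x y : ℝ, 0 < x → x ≤ y → y ^ (-2:ℤ) ≤ x ^ (-2:ℤ) := by
    intro x y hx hxy
    have hy : 0 < y := hx.trans_le hxy
    rw [zpow_neg, zpow_neg, zpow_two, zpow_two]
    apply inv_anti₀ (by positivity)
    nlinarith
  have hΔF : 0 < DeltaFull I := hΔ.trans_le hSF
  exact ⟨key _ _ hΔF hFP, key _ _ hΔ hSF⟩
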